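/- In any k-closure graph cl_k(D) of a DAG D, every pair of non-adjacent nodes a,b is d-separated in cl_k(D) by some set S of size at most k. -/

import Mathlib

/-- A mixed graph: directed edges `dir` and bidirected edges `bi`. -/
structure MixedGraph (V : Type) where
  dir : V → V → Prop
  bi : V → V → Prop

namespace MixedGraph

variable {V : Type} (G : MixedGraph V)

/-- symmetric view of bidirected adjacency -/
def biAdj (a b : V) : Prop := G.bi a b ∨ G.bi b a

/-- `step G u v hu hv` : an edge between `u` and `v` with arrowhead-at-`u` = `hu`
and arrowhead-at-`v` = `hv`. -/
def step (u v : V) (hu hv : Bool) : Prop :=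
  (hu = false ∧ hv = true ∧ G.dir u v) ∨
  (hu = true ∧ hv = false ∧ G.dir v u) ∨
  (hu = true ∧ hv = true ∧ G.biAdj u v)

/-- Walks in a mixed graph, recording the arrowhead marks of each traversed edge. -/
inductive Walk : V → V → Type _
  | nil (v : V) : Walk v v
  | cons {u v w : V} (hu hv : Bool) (h : G.step u v hu hv) (p : Walk v w) : Walk u w

variable {G}

def Walk.support : ∀ {a b : V}, G.Walk a b → List V
  | _, _, .nil v => [v]
  | _, _, .cons (u := u) _ _ _ p => u :: p.support

/-- List of internal vertices together with the two arrowhead marks adjacent to them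
(incoming mark, outgoing mark): a vertex is a collider iff both are `true`. -/
def Walk.marksInternal : ∀ {a b : V}, G.Walk a b → List (V × Bool × Bool)
  | _, _, .nil _ => []
  | _, _, .cons _ hv _ q =>
    match q with
    | .nil _ => []
    | .cons (u := m) hu' _ _ _ => (m, hv, hu') :: q.marksInternal

/-- The arrowhead mark at the first vertex of a walk (if nonempty). -/
def Walk.firstHead : ∀ {a b : V}, G.Walk a b → Option Bool
  | _, _, .nil _ => none
  | _, _, .cons hu _ _ _ => some hu

/-- The arrowhead mark at the last vertex of a walk (if nonempty). -/
def Walk.lastHead : ∀ {a b : V}, G.Walk a b → Option Bool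
  | _, _, .nil _ => none
  | _, _, .cons _ hv _ q =>
    match q with
    | .nil _ => some hv
    | .cons _ _ _ _ => q.lastHead

variable (G)

/-- Ancestorship in a mixed graph: directed edges only (reflexive). -/
def Anc (a b : V) : Prop := Relation.ReflTransGen G.dir a b

variable {G}

/-- A walk is d-connecting given `c` iff every collider on it is an ancestor of some
node of `c` and every non-collider is not in `c`. -/
def Walk.DConnecting (c : Set V) {a b : V} (w : G.Walk a b) : Prop :=
  ∀ m ∈ w.marksInternal,
    ((m.2.1 = true ∧ m.2.2 = true) → ∃ x ∈ c, G.Anc m.1 x) ∧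
    (¬ (m.2.1 = true ∧ m.2.2 = true) → m.1 ∉ c)

/-- A walk is active given `c` iff every collider on it is in `c` and every
non-collider is not in `c`. -/
def Walk.Active (c : Set V) {a b : V} (w : G.Walk a b) : Prop :=
  ∀ m ∈ w.marksInternal,
    ((m.2.1 = true ∧ m.2.2 = true) → m.1 ∈ c) ∧
    (¬ (m.2.1 = true ∧ m.2.2 = true) → m.1 ∉ c)

/-- A path is a walk without repeated vertices. -/
def Walk.IsPath {a b : V} (w : G.Walk a b) : Prop := w.support.Nodup

variable (G)

/-- d-connection: existence of a d-connecting path. -/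
def DConn (c : Set V) (a b : V) : Prop :=
  ∃ w : G.Walk a b, w.IsPath ∧ w.DConnecting c

/-- d-separation (m-separation in mixed graphs). -/
def DSep (c : Set V) (a b : V) : Prop := ¬ G.DConn c a b

/-- Adjacency in a mixed graph. -/
def Adj (a b : V) : Prop := G.dir a b ∨ G.dir b a ∨ G.biAdj a b

end MixedGraph

/-- View a directed graph as a mixed graph with no bidirected edges. -/
def ofDAG {V : Type} (E : V → V → Prop) : MixedGraph V := ⟨E, fun _ _ => False⟩

/-- Acyclicity of a directed graph. -/
def Acyclic {V : Type} (E : V → V → Prop) : Prop := ∀ a, ¬ Relation.TransGen E a a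

/-- `a, b` are `k`-covered in `E`: no conditioning set of size at most `k` d-separates them. -/
def KCovered {V : Type} (E : V → V → Prop) (k : ℕ) (a b : V) : Prop :=
  ∀ c : Finset V, c.card ≤ k → ¬ (ofDAG E).DSep (↑c) a b

/-- The `k`-closure of a DAG: every `k`-covered pair is adjacent, oriented by
ancestrality in `E`, bidirected when neither endpoint is an ancestor of the other. -/
def kClosure {V : Type} (E : V → V → Prop) (k : ℕ) : MixedGraph V where
  dir a b := KCovered E k a b ∧ Relation.TransGen E a b
  bi a b := KCovered E k a b ∧ KCovered E k b a ∧
    ¬ Relation.ReflTransGen E a b ∧ ¬ Relation.ReflTransGen E b a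

/-- Maximal ancestral graph: no directed cycles, no almost directed cycles,
and every non-adjacent pair of distinct nodes is d-separable. -/
def IsMAG {V : Type} (G : MixedGraph V) : Prop :=
  (∀ a, ¬ Relation.TransGen G.dir a a) ∧
  (∀ a b, Relation.TransGen G.dir a b → ¬ G.biAdj a b) ∧
  (∀ a b, a ≠ b → ¬ G.Adj a b → ∃ S : Set V, G.DSep S a b)

/-- k-Markov equivalence of two directed graphs. -/
def kMarkovEquiv {V : Type} (E₁ E₂ : V → V → Prop) (k : ℕ) : Prop :=
  ∀ a b, ∀ c : Finset V, c.card ≤ k →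
    ((ofDAG E₁).DSep (↑c) a b ↔ (ofDAG E₂).DSep (↑c) a b)

/-- Markov equivalence of two mixed graphs. -/
def MarkovEquiv {V : Type} (G₁ G₂ : MixedGraph V) : Prop :=
  ∀ a b, ∀ c : Set V, G₁.DSep c a b ↔ G₂.DSep c a b

/-! ## auxiliary development -/

namespace MixedGraph

variable {V : Type} {G : MixedGraph V}

theorem biAdj_symm {a b : V} (h : G.biAdj a b) : G.biAdj b a := h.symm

theorem step_symm {u v : V} {hu hv : Bool} (h : G.step u v hu hv) : G.step v u hv hu := by
  rcases h with ⟨h1, h2, h3⟩ | ⟨h1, h2, h3⟩ | ⟨h1, h2, h3⟩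
  · exact Or.inr (Or.inl ⟨h2, h1, h3⟩)
  · exact Or.inl ⟨h2, h1, h3⟩
  · exact Or.inr (Or.inr ⟨h2, h1, biAdj_symm h3⟩)

def Walk.append : ∀ {a m b : V}, G.Walk a m → G.Walk m b → G.Walk a b
  | _, _, _, .nil _, w2 => w2
  | _, _, _, .cons hu hv h p, w2 => .cons hu hv h (p.append w2)

def Walk.length : ∀ {a b : V}, G.Walk a b → ℕ
  | _, _, .nil _ => 0
  | _, _, .cons _ _ _ p => p.length + 1

@[simp] theorem Walk.nil_append {a b : V} (w : G.Walk a b) : (Walk.nil a).append w = w := rfl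

@[simp] theorem Walk.cons_append {a v m b : V} (hu hv : Bool) (h : G.step a v hu hv)
    (p : G.Walk v m) (w : G.Walk m b) :
    (Walk.cons hu hv h p).append w = Walk.cons hu hv h (p.append w) := rfl

theorem Walk.length_append : ∀ {a m b : V} (w1 : G.Walk a m) (w2 : G.Walk m b),
    (w1.append w2).length = w1.length + w2.length
  | _, _, _, .nil _, w2 => by simp [Walk.length]
  | _, _, _, .cons hu hv h p, w2 => by
    simp [Walk.length, Walk.length_append p w2]; omega

theorem Walk.support_eq_cons : ∀ {a b : V} (w : G.Walk a b), ∃ l, w.support = a :: l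
  | _, _, .nil v => ⟨[], rfl⟩
  | _, _, .cons _ _ _ p => ⟨p.support, rfl⟩

theorem Walk.support_append : ∀ {a m b : V} (w1 : G.Walk a m) (w2 : G.Walk m b),
    (w1.append w2).support = w1.support ++ w2.support.tail
  | _, _, _, .nil v, w2 => by
    obtain ⟨l, hl⟩ := w2.support_eq_cons
    simp [Walk.support, hl]
  | _, _, _, .cons hu hv h p, w2 => by
    simp [Walk.support, Walk.support_append p w2]

@[simp] theorem Walk.firstHead_nil (v : V) : (Walk.nil v : G.Walk v v).firstHead = none := rfl
@[simp] theorem Walk.firstHead_cons {u v b : V} (hu hv : Bool) (h : G.step u v hu hv)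
    (p : G.Walk v b) : (Walk.cons hu hv h p).firstHead = some hu := rfl
@[simp] theorem Walk.lastHead_nil (v : V) : (Walk.nil v : G.Walk v v).lastHead = none := rfl
@[simp] theorem Walk.lastHead_cons_nil {u v : V} (hu hv : Bool) (h : G.step u v hu hv) :
    (Walk.cons hu hv h (Walk.nil v)).lastHead = some hv := rfl
@[simp] theorem Walk.lastHead_cons_cons {u v m b : V} (hu hv hu2 hv2 : Bool)
    (h : G.step u v hu hv) (h2 : G.step v m hu2 hv2) (p : G.Walk m b) :
    (Walk.cons hu hv h (Walk.cons hu2 hv2 h2 p)).lastHead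
      = (Walk.cons hu2 hv2 h2 p).lastHead := rfl
@[simp] theorem Walk.marksInternal_nil (v : V) :
    (Walk.nil v : G.Walk v v).marksInternal = [] := rfl
@[simp] theorem Walk.marksInternal_cons_nil {u v : V} (hu hv : Bool) (h : G.step u v hu hv) :
    (Walk.cons hu hv h (Walk.nil v)).marksInternal = [] := rfl
@[simp] theorem Walk.marksInternal_cons_cons {u v m b : V} (hu hv hu2 hv2 : Bool)
    (h : G.step u v hu hv) (h2 : G.step v m hu2 hv2) (p : G.Walk m b) :
    (Walk.cons hu hv h (Walk.cons hu2 hv2 h2 p)).marksInternal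
      = (v, hv, hu2) :: (Walk.cons hu2 hv2 h2 p).marksInternal := rfl
@[simp] theorem Walk.support_nil (v : V) : (Walk.nil v : G.Walk v v).support = [v] := rfl
@[simp] theorem Walk.support_cons {u v b : V} (hu hv : Bool) (h : G.step u v hu hv)
    (p : G.Walk v b) : (Walk.cons hu hv h p).support = u :: p.support := rfl

theorem Walk.lastHead_cons_isSome : ∀ {u v b : V} (hu hv : Bool) (h : G.step u v hu hv)
    (p : G.Walk v b), ∃ x, (Walk.cons hu hv h p).lastHead = some x
  | _, _, _, hu, hv, h, .nil _ => ⟨hv, rfl⟩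
  | _, _, _, hu, hv, h, .cons hu2 hv2 h2 p => Walk.lastHead_cons_isSome hu2 hv2 h2 p

theorem Walk.firstHead_append : ∀ {a m b : V} (w1 : G.Walk a m) (w2 : G.Walk m b),
    (w1.append w2).firstHead = match w1.firstHead with
      | some x => some x
      | none => w2.firstHead
  | _, _, _, .nil _, w2 => rfl
  | _, _, _, .cons _ _ _ _, _ => rfl

theorem Walk.lastHead_append : ∀ {a m b : V} (w1 : G.Walk a m) (w2 : G.Walk m b),
    (w1.append w2).lastHead = match w2.lastHead with
      | some x => some x
      | none => w1.lastHead
  | _, _, _, .nil _, w2 => by cases h : w2.lastHead <;> simp [h]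
  | _, _, _, .cons hu hv h (.nil _), w2 => by
    cases w2 with
    | nil => simp
    | cons hu2 hv2 h2 q =>
      obtain ⟨x, hx⟩ := Walk.lastHead_cons_isSome hu2 hv2 h2 q
      simp [Walk.append, hx]
  | _, _, _, .cons hu hv h (.cons hu2 hv2 h2 p), w2 => by
    have ih := Walk.lastHead_append (Walk.cons hu2 hv2 h2 p) w2
    simpa [Walk.append] using ih

theorem Walk.marksInternal_append : ∀ {a m b : V} (w1 : G.Walk a m) (w2 : G.Walk m b),
    (w1.append w2).marksInternal = w1.marksInternal ++
      (match w1.lastHead, w2.firstHead with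
        | some x, some y => [(m, x, y)]
        | _, _ => []) ++ w2.marksInternal
  | _, _, _, .nil _, w2 => by simp
  | _, _, _, .cons hu hv h (.nil _), w2 => by
    cases w2 <;> simp [Walk.append]
  | _, _, _, .cons hu hv h (.cons hu2 hv2 h2 p), w2 => by
    have ih := Walk.marksInternal_append (Walk.cons hu2 hv2 h2 p) w2
    obtain ⟨l, hl⟩ : ∃ l, ((Walk.cons hu2 hv2 h2 p).append w2).marksInternal = l := ⟨_, rfl⟩
    cases p with
    | nil => simp_all [Walk.append]
    | cons hu3 hv3 h3 q => simp_all [Walk.append]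

def Walk.reverse : ∀ {a b : V}, G.Walk a b → G.Walk b a
  | _, _, .nil v => .nil v
  | _, _, .cons hu hv h p => p.reverse.append (.cons hv hu (step_symm h) (.nil _))

@[simp] theorem Walk.reverse_nil (v : V) : (Walk.nil v : G.Walk v v).reverse = Walk.nil v := rfl

theorem Walk.firstHead_reverse : ∀ {a b : V} (w : G.Walk a b),
    w.reverse.firstHead = w.lastHead
  | _, _, .nil _ => rfl
  | _, _, .cons hu hv h p => by
    have hr : (Walk.cons hu hv h p).reverse
        = p.reverse.append (Walk.cons hv hu (step_symm h) (.nil _)) := rfl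
    rw [hr, Walk.firstHead_append]
    cases p with
    | nil => simp
    | cons hu2 hv2 h2 q =>
      have ih := Walk.firstHead_reverse (Walk.cons hu2 hv2 h2 q)
      obtain ⟨xx, hxx⟩ := Walk.lastHead_cons_isSome hu2 hv2 h2 q
      rw [hxx] at ih
      rw [ih]
      simp [hxx]

theorem Walk.lastHead_reverse : ∀ {a b : V} (w : G.Walk a b),
    w.reverse.lastHead = w.firstHead
  | _, _, .nil _ => rfl
  | _, _, .cons hu hv h p => by
    simp only [Walk.reverse]
    rw [Walk.lastHead_append]
    simp

theorem Walk.support_reverse : ∀ {a b : V} (w : G.Walk a b),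
    w.reverse.support = w.support.reverse
  | _, _, .nil _ => rfl
  | _, _, .cons hu hv h p => by
    simp only [Walk.reverse]
    rw [Walk.support_append, Walk.support_reverse p]
    simp

theorem Walk.length_reverse : ∀ {a b : V} (w : G.Walk a b),
    w.reverse.length = w.length
  | _, _, .nil _ => rfl
  | _, _, .cons hu hv h p => by
    simp only [Walk.reverse]
    rw [Walk.length_append, Walk.length_reverse p]
    simp [Walk.length]

theorem Walk.marksInternal_reverse : ∀ {a b : V} (w : G.Walk a b),
    w.reverse.marksInternal
      = (w.marksInternal.map (fun m => (m.1, m.2.2, m.2.1))).reverse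
  | _, _, .nil _ => rfl
  | _, _, .cons hu hv h (.nil _) => rfl
  | _, _, .cons hu hv h (.cons (v := m) hu2 hv2 h2 p) => by
    have ih := Walk.marksInternal_reverse (Walk.cons hu2 hv2 h2 p)
    simp only [Walk.reverse] at *
    rw [Walk.marksInternal_append, ih]
    rw [Walk.lastHead_append]
    simp only [Walk.lastHead_cons_nil, Walk.firstHead_cons, Walk.marksInternal_cons_nil,
      Walk.marksInternal_cons_cons]
    simp

theorem Walk.DConnecting.of_sub {c : Set V} {a b a' b' : V} {w : G.Walk a b}
    {w' : G.Walk a' b'} (hsub : ∀ m ∈ w'.marksInternal, m ∈ w.marksInternal)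
    (h : w.DConnecting c) : w'.DConnecting c := fun m hm => h m (hsub m hm)

theorem Walk.Active.of_sub {c : Set V} {a b a' b' : V} {w : G.Walk a b}
    {w' : G.Walk a' b'} (hsub : ∀ m ∈ w'.marksInternal, m ∈ w.marksInternal)
    (h : w.Active c) : w'.Active c := fun m hm => h m (hsub m hm)

theorem Walk.Active.dconnecting {c : Set V} {a b : V} {w : G.Walk a b}
    (h : w.Active c) : w.DConnecting c := by
  intro m hm
  refine ⟨fun hc => ⟨m.1, (h m hm).1 hc, Relation.ReflTransGen.refl⟩, (h m hm).2⟩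

theorem Walk.DConnecting.reverse {c : Set V} {a b : V} {w : G.Walk a b}
    (h : w.DConnecting c) : w.reverse.DConnecting c := by
  intro m hm
  rw [Walk.marksInternal_reverse] at hm
  simp only [List.mem_reverse, List.mem_map] at hm
  obtain ⟨⟨v, i, o⟩, hmem, heq⟩ := hm
  cases heq
  have := h _ hmem
  constructor
  · rintro ⟨h1, h2⟩; exact this.1 ⟨h2, h1⟩
  · intro hnc; exact this.2 (fun hh => hnc ⟨hh.2, hh.1⟩)

theorem Walk.Active.reverse {c : Set V} {a b : V} {w : G.Walk a b}
    (h : w.Active c) : w.reverse.Active c := by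
  intro m hm
  rw [Walk.marksInternal_reverse] at hm
  simp only [List.mem_reverse, List.mem_map] at hm
  obtain ⟨⟨v, i, o⟩, hmem, heq⟩ := hm
  cases heq
  have := h _ hmem
  constructor
  · rintro ⟨h1, h2⟩; exact this.1 ⟨h2, h1⟩
  · intro hnc; exact this.2 (fun hh => hnc ⟨hh.2, hh.1⟩)

theorem Walk.IsPath.reverse {a b : V} {w : G.Walk a b} (h : w.IsPath) :
    w.reverse.IsPath := by
  unfold Walk.IsPath at *
  rw [Walk.support_reverse]
  simpa using h

theorem DConn.symm {c : Set V} {a b : V} (h : G.DConn c a b) : G.DConn c b a := by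
  obtain ⟨w, hp, hc⟩ := h
  exact ⟨w.reverse, hp.reverse, hc.reverse⟩

theorem DSep.symm {c : Set V} {a b : V} (h : G.DSep c a b) : G.DSep c b a :=
  fun hc => h hc.symm

/-- split a walk at an occurrence of a vertex -/
theorem Walk.splitAt : ∀ {a b : V} (w : G.Walk a b) (x : V), x ∈ w.support →
    ∃ (w1 : G.Walk a x) (w2 : G.Walk x b), w = w1.append w2
  | _, _, .nil v, x, hx => by
    have : x = v := by simpa using hx
    subst this
    exact ⟨.nil x, .nil x, rfl⟩
  | _, _, .cons (u := u) hu hv h p, x, hx => by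
    by_cases hxu : x = u
    · subst hxu
      exact ⟨.nil x, .cons hu hv h p, rfl⟩
    · have hx' : x ∈ p.support := by
        rcases (by simpa using hx) with h1 | h1
        · exact absurd h1 hxu
        · exact h1
      obtain ⟨w1, w2, hw⟩ := Walk.splitAt p x hx'
      exact ⟨.cons hu hv h w1, w2, by rw [hw]; rfl⟩

/-- cut out a nontrivial loop from a non-path walk -/
theorem Walk.cutLoop : ∀ {a b : V} (w : G.Walk a b), ¬ w.support.Nodup →
    ∃ (x : V) (w1 : G.Walk a x) (wm : G.Walk x x) (w2 : G.Walk x b),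
      w = w1.append (wm.append w2) ∧ 1 ≤ wm.length
  | _, _, .nil v, hn => absurd (by simp) hn
  | _, _, .cons (u := u) hu hv h p, hn => by
    rw [Walk.support_cons, List.nodup_cons] at hn
    push_neg at hn
    by_cases hu' : u ∈ p.support
    · obtain ⟨p1, p2, hp⟩ := Walk.splitAt p u hu'
      refine ⟨u, .nil u, .cons hu hv h p1, p2, ?_, by simp [Walk.length]⟩
      rw [hp]; rfl
    · obtain ⟨x, w1, wm, w2, hw, hlen⟩ := Walk.cutLoop p (hn hu')
      exact ⟨x, .cons hu hv h w1, wm, w2, by rw [hw]; rfl, hlen⟩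

/-! ## DAG-specific lemmas -/

theorem Walk.splitMark : ∀ {a b : V} (W : G.Walk a b) {x : V} {i o : Bool},
    (x, i, o) ∈ W.marksInternal →
    ∃ W2 : G.Walk x b, W2.firstHead = some o ∧
      ∀ mk ∈ W2.marksInternal, mk ∈ W.marksInternal
  | _, _, .nil _, _, _, _, hm => by simp at hm
  | _, _, .cons hu hv h (.nil _), _, _, _, hm => by simp at hm
  | _, _, .cons (v := s) hu hv h (.cons hu2 hv2 h2 q), x, i, o, hm => by
    rw [Walk.marksInternal_cons_cons, List.mem_cons] at hm
    rcases hm with hm | hm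
    · obtain ⟨rfl, rfl, rfl⟩ : x = s ∧ i = hv ∧ o = hu2 := by simpa [Prod.ext_iff] using hm
      refine ⟨Walk.cons _ hv2 h2 q, rfl, fun mk hmk => by simp [hmk]⟩
    · obtain ⟨W2, h1, hsub⟩ := Walk.splitMark (Walk.cons hu2 hv2 h2 q) hm
      exact ⟨W2, h1, fun mk hmk => by simp [hsub mk hmk]⟩

end MixedGraph

namespace OfDag

open MixedGraph

variable {V : Type} {E : V → V → Prop}

theorem step_iff {u v : V} {hu hv : Bool} :
    (ofDAG E).step u v hu hv ↔
      (hu = false ∧ hv = true ∧ E u v) ∨ (hu = true ∧ hv = false ∧ E v u) := by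
  constructor
  · rintro (h | h | ⟨_, _, h | h⟩)
    · exact Or.inl h
    · exact Or.inr h
    · exact absurd h id
    · exact absurd h id
  · rintro (h | h)
    · exact Or.inl h
    · exact Or.inr (Or.inl h)

theorem anc_iff {u v : V} : (ofDAG E).Anc u v ↔ Relation.ReflTransGen E u v := Iff.rfl

/-- trace lemma: a d-connecting walk starting with a tail yields a directed path
to the end or into an ancestor of `c`. -/
theorem trace {c : Set V} : ∀ {d v : V} (W : (ofDAG E).Walk d v), W.DConnecting c →
    W.firstHead = some false →
    Relation.TransGen E d v ∨ ∃ w ∈ c, Relation.TransGen E d w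
  | _, _, .nil _, _, hf => by simp at hf
  | _, _, .cons hu hv h p, hdc, hf => by
    have hu0 : hu = false := by simpa using hf
    subst hu0
    have hstep := step_iff.mp h
    rcases hstep with ⟨_, rfl, hE⟩ | ⟨hfalse, _, _⟩
    swap
    · exact absurd hfalse (by simp)
    cases p with
    | nil => exact Or.inl (Relation.TransGen.single hE)
    | cons hu2 hv2 h2 q =>
      rcases Bool.eq_false_or_eq_true hu2 with h2t | h2f
      · subst h2t
        obtain ⟨x, hx, hanc⟩ := (hdc _ (by
          rw [Walk.marksInternal_cons_cons]; exact List.mem_cons_self)).1 ⟨rfl, rfl⟩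
        exact Or.inr ⟨x, hx, Relation.TransGen.trans_left (Relation.TransGen.single hE) hanc⟩
      · subst h2f
        have hsub : ∀ mk ∈ (Walk.cons (false : Bool) hv2 h2 q).marksInternal,
            mk ∈ (Walk.cons (false : Bool) true h (Walk.cons false hv2 h2 q)).marksInternal := by
          intro mk hmk; simp [hmk]
        have ihres := trace (Walk.cons (false : Bool) hv2 h2 q)
          (Walk.DConnecting.of_sub hsub hdc) rfl
        rcases ihres with ih | ⟨w, hw, hw2⟩
        · exact Or.inl (Relation.TransGen.head hE ih)
        · exact Or.inr ⟨w, hw, Relation.TransGen.head hE hw2⟩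

/-- a down-and-up detour from `m` into `c`. -/
theorem detour {c : Set V} {z : V} (hz : z ∈ c) : ∀ {m : V},
    Relation.ReflTransGen E m z → m ∉ c →
    ∃ d : (ofDAG E).Walk m m, d.Active c ∧ d.firstHead = some false ∧
      d.lastHead = some false := by
  intro m hrt
  induction hrt using Relation.ReflTransGen.head_induction_on with
  | refl => exact fun h => absurd hz h
  | @head m' m1 hE hrt ih =>
    intro hmc
    have st1 : (ofDAG E).step m' m1 false true := step_iff.mpr (Or.inl ⟨rfl, rfl, hE⟩)
    have st2 : (ofDAG E).step m1 m' true false := step_iff.mpr (Or.inr ⟨rfl, rfl, hE⟩)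
    by_cases hm1 : m1 ∈ c
    · refine ⟨Walk.cons false true st1 (Walk.cons true false st2 (Walk.nil m')), ?_, rfl, rfl⟩
      intro mk hmk
      simp only [Walk.marksInternal_cons_cons, Walk.marksInternal_cons_nil,
        List.mem_cons, List.not_mem_nil, or_false] at hmk
      subst hmk
      exact ⟨fun _ => hm1, fun hn => absurd ⟨rfl, rfl⟩ hn⟩
    · obtain ⟨d1, hact, hf1, hl1⟩ := ih hm1
      cases d1 with
      | nil => simp at hf1
      | cons g1 g2 gst gq =>
        have hg1 : g1 = false := by simpa using hf1
        subst hg1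
        refine ⟨Walk.cons false true st1 ((Walk.cons false g2 gst gq).append
          (Walk.cons true false st2 (Walk.nil m'))), ?_, rfl, ?_⟩
        · intro mk hmk
          have hmarks := Walk.marksInternal_append (Walk.cons false g2 gst gq)
            (Walk.cons true false st2 (Walk.nil m'))
          rw [hl1] at hmarks
          simp only [Walk.firstHead_cons, Walk.marksInternal_cons_nil] at hmarks
          have hmk2 : mk = (m1, true, false) ∨
              mk ∈ ((Walk.cons false g2 gst gq).append
                (Walk.cons true false st2 (Walk.nil m'))).marksInternal := by
            cases gq with
            | nil => simpa using hmk
            | cons _ _ _ _ => simpa using hmk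
          rcases hmk2 with rfl | hmk2
          · exact ⟨fun hcol => absurd hcol.2 (by simp), fun _ => hm1⟩
          · have hmk3 : mk ∈ (Walk.cons false g2 gst gq).marksInternal ∨
                mk = (m1, false, true) := by
              rw [hmarks] at hmk2
              simpa using hmk2
            rcases hmk3 with hmk3 | rfl
            · exact hact mk hmk3
            · exact ⟨fun hcol => absurd hcol.1 (by simp), fun _ => hm1⟩
        · rw [show Walk.cons false true st1 ((Walk.cons false g2 gst gq).append
              (Walk.cons true false st2 (Walk.nil m')))
              = (Walk.cons false true st1 (Walk.cons false g2 gst gq)).append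
                (Walk.cons true false st2 (Walk.nil m')) from rfl]
          rw [Walk.lastHead_append]
          simp

/-- convert a d-connecting walk into an active walk, preserving end marks. -/
theorem activate {c : Set V} : ∀ {u b : V} (W : (ofDAG E).Walk u b), W.DConnecting c →
    ∃ W' : (ofDAG E).Walk u b, W'.Active c ∧ W'.firstHead = W.firstHead ∧
      W'.lastHead = W.lastHead
  | _, _, .nil v, _ => ⟨.nil v, fun mk hmk => by simp at hmk, rfl, rfl⟩
  | _, _, .cons hu hv h (.nil _), _ =>
    ⟨.cons hu hv h (.nil _), fun mk hmk => by simp at hmk, rfl, rfl⟩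
  | _, _, .cons (v := s) hu hv h (.cons hu2 hv2 h2 q), hdc => by
    have hsub : ∀ mk ∈ (Walk.cons hu2 hv2 h2 q).marksInternal,
        mk ∈ (Walk.cons hu hv h (Walk.cons hu2 hv2 h2 q)).marksInternal := by
      intro mk hmk; simp [hmk]
    obtain ⟨p', hact, hf, hl⟩ := activate (Walk.cons hu2 hv2 h2 q)
      (Walk.DConnecting.of_sub hsub hdc)
    cases p' with
    | nil => simp at hf
    | cons g1 g2 gst gq =>
      have hg1 : hu2 = g1 := by simpa using hf.symm
      subst hg1
      have hheadmem : (s, hv, hu2) ∈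
          (Walk.cons hu hv h (Walk.cons hu2 hv2 h2 q)).marksInternal := by simp
      have hlast : (Walk.cons hu hv h (Walk.cons hu2 hv2 h2 q)).lastHead
          = (Walk.cons hu2 hv2 h2 q).lastHead := rfl
      by_cases hcol : hv = true ∧ hu2 = true
      · obtain ⟨x, hx, hanc⟩ := (hdc _ hheadmem).1 hcol
        by_cases hsc : s ∈ c
        · refine ⟨Walk.cons hu hv h (Walk.cons hu2 g2 gst gq), ?_, rfl, ?_⟩
          · intro mk hmk
            simp only [Walk.marksInternal_cons_cons, List.mem_cons] at hmk
            rcases hmk with rfl | hmk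
            · exact ⟨fun _ => hsc, fun hn => absurd hcol hn⟩
            · exact hact mk hmk
          · exact hl
        · obtain ⟨d, hdact, hdf, hdl⟩ := detour (E := E) hx hanc hsc
          cases d with
          | nil => simp at hdf
          | cons d1 d2 dst dq =>
            have hd1 : d1 = false := by simpa using hdf
            subst hd1
            refine ⟨Walk.cons hu hv h ((Walk.cons false d2 dst dq).append
              (Walk.cons hu2 g2 gst gq)), ?_, rfl, ?_⟩
            · intro mk hmk
              have hmarks := Walk.marksInternal_append (Walk.cons false d2 dst dq)
                (Walk.cons hu2 g2 gst gq)
              rw [hdl] at hmarks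
              simp only [Walk.firstHead_cons] at hmarks
              have hmk2 : mk = (s, hv, false) ∨
                  mk ∈ ((Walk.cons false d2 dst dq).append
                    (Walk.cons hu2 g2 gst gq)).marksInternal := by
                cases dq with
                | nil => simpa using hmk
                | cons _ _ _ _ => simpa using hmk
              rcases hmk2 with rfl | hmk2
              · exact ⟨fun hc2 => absurd hc2.2 (by simp), fun _ => hsc⟩
              · have hmk3 : mk ∈ (Walk.cons false d2 dst dq).marksInternal ∨
                    mk = (s, false, hu2) ∨ mk ∈ (Walk.cons hu2 g2 gst gq).marksInternal := by
                  rw [hmarks] at hmk2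
                  simpa using hmk2
                rcases hmk3 with hmk3 | rfl | hmk3
                · exact hdact mk hmk3
                · exact ⟨fun hc2 => absurd hc2.1 (by simp), fun _ => hsc⟩
                · exact hact mk hmk3
            · rw [hlast]
              rw [show Walk.cons hu hv h ((Walk.cons false d2 dst dq).append
                    (Walk.cons hu2 g2 gst gq))
                  = (Walk.cons hu hv h (Walk.cons false d2 dst dq)).append
                    (Walk.cons hu2 g2 gst gq) from rfl]
              rw [Walk.lastHead_append]
              obtain ⟨y, hy⟩ := Walk.lastHead_cons_isSome hu2 g2 gst gq
              rw [hy]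
              rw [hy] at hl
              exact hl
      · have hsc : s ∉ c := (hdc _ hheadmem).2 hcol
        refine ⟨Walk.cons hu hv h (Walk.cons hu2 g2 gst gq), ?_, rfl, ?_⟩
        · intro mk hmk
          simp only [Walk.marksInternal_cons_cons, List.mem_cons] at hmk
          rcases hmk with rfl | hmk
          · exact ⟨fun hc2 => absurd hc2 hcol, fun _ => hsc⟩
          · exact hact mk hmk
        · rw [hlast]; exact hl

/-- every d-connecting walk yields a d-connecting path. -/
theorem toPath (hAc : Acyclic E) {c : Set V} : ∀ (n : ℕ) {a b : V}
    (W : (ofDAG E).Walk a b), W.length ≤ n → W.DConnecting c → (ofDAG E).DConn c a b := by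
  intro n
  induction n with
  | zero =>
    intro a b W hlen hdc
    cases W with
    | nil => exact ⟨.nil _, by simp [Walk.IsPath], fun mk hmk => by simp at hmk⟩
    | cons _ _ _ _ => simp [Walk.length] at hlen
  | succ n ih =>
    intro a b W hlen hdc
    by_cases hnd : W.support.Nodup
    · exact ⟨W, hnd, hdc⟩
    obtain ⟨x, w1, wm, w2, rfl, hm1⟩ := Walk.cutLoop W hnd
    have hMW := Walk.marksInternal_append w1 (wm.append w2)
    have hMm := Walk.marksInternal_append wm w2
    have hMW' := Walk.marksInternal_append w1 w2
    cases wm with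
    | nil => simp [Walk.length] at hm1
    | cons m1h m2h mst mq =>
    obtain ⟨mδ, hmδ⟩ := Walk.lastHead_cons_isSome m1h m2h mst mq
    rw [Walk.firstHead_append] at hMW
    rw [hmδ] at hMm
    simp only [Walk.firstHead_cons] at hMW
    have hsubm : ∀ mk ∈ (Walk.cons m1h m2h mst mq).marksInternal,
        mk ∈ (w1.append ((Walk.cons m1h m2h mst mq).append w2)).marksInternal := by
      intro mk hmk
      rw [hMW, hMm]
      simp [hmk]
    have hsub1 : ∀ mk ∈ w1.marksInternal,
        mk ∈ (w1.append ((Walk.cons m1h m2h mst mq).append w2)).marksInternal := by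
      intro mk hmk
      rw [hMW]
      simp [hmk]
    have hsub2 : ∀ mk ∈ w2.marksInternal,
        mk ∈ (w1.append ((Walk.cons m1h m2h mst mq).append w2)).marksInternal := by
      intro mk hmk
      rw [hMW, hMm]
      simp [hmk]
    have hlen' : (w1.append w2).length ≤ n := by
      rw [Walk.length_append] at hlen ⊢
      rw [Walk.length_append] at hlen
      simp [Walk.length] at hlen
      omega
    have hdc' : (w1.append w2).DConnecting c := by
      intro mk hmk
      rw [hMW'] at hmk
      rcases List.mem_append.mp hmk with hmk2 | hmk2
      rcases List.mem_append.mp hmk2 with hmk3 | hmk3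
      · exact hdc mk (hsub1 mk hmk3)
      · -- junction mark
        cases hl1 : w1.lastHead with
        | none => rw [hl1] at hmk3; simp at hmk3
        | some lam =>
          cases hf2 : w2.firstHead with
          | none => rw [hl1, hf2] at hmk3; simp at hmk3
          | some phi =>
            rw [hl1, hf2] at hmk3
            simp only [List.mem_singleton] at hmk3
            subst hmk3
            have hJ1 : (x, lam, m1h) ∈
                (w1.append ((Walk.cons m1h m2h mst mq).append w2)).marksInternal := by
              rw [hMW, hl1]
              simp
            have hJ2 : (x, mδ, phi) ∈
                (w1.append ((Walk.cons m1h m2h mst mq).append w2)).marksInternal := by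
              rw [hMW, hMm, hf2]
              simp
            constructor
            · rintro ⟨hlam, hphi⟩
              cases m1h with
              | true => exact (hdc _ hJ1).1 ⟨hlam, rfl⟩
              | false =>
                have htr := trace (Walk.cons false m2h mst mq)
                  (Walk.DConnecting.of_sub hsubm hdc) rfl
                rcases htr with htr | ⟨w, hw, hw2⟩
                · exact absurd htr (hAc x)
                · exact ⟨w, hw, hw2.to_reflTransGen⟩
            · intro hnc
              by_cases hlam : lam = true
              · have hphi : phi = false := by
                  cases phi
                  · rfl
                  · exact absurd ⟨hlam, rfl⟩ hnc
                rw [hphi] at hJ2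
                exact (hdc _ hJ2).2 (by simp)
              · have : lam = false := by cases lam; rfl; exact absurd rfl hlam
                rw [this] at hJ1
                exact (hdc _ hJ1).2 (by simp)
      · exact hdc mk (hsub2 mk hmk2)
    exact ih (w1.append w2) hlen' hdc'

/-- a directed path all of whose vertices avoid `c` is an active walk. -/
theorem directedWalk {c : Set V} {v : V} : ∀ {u : V}, Relation.TransGen E u v →
    (∀ s, Relation.TransGen E u s → s ∉ c) →
    ∃ W : (ofDAG E).Walk u v, W.Active c ∧ W.firstHead = some false ∧
      W.lastHead = some true := by
  intro u h
  induction h using Relation.TransGen.head_induction_on with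
  | single hE =>
    intro _
    exact ⟨Walk.cons false true (step_iff.mpr (Or.inl ⟨rfl, rfl, hE⟩)) (.nil _),
      fun mk hmk => by simp at hmk, rfl, rfl⟩
  | head hE h ihres =>
    rename_i m' m1
    intro hc
    obtain ⟨Wm, hact, hf, hl⟩ := ihres (fun s hs => hc s (Relation.TransGen.head hE hs))
    cases Wm with
    | nil => simp at hf
    | cons g1 g2 gst gq =>
      have hg1 : g1 = false := by simpa using hf
      subst hg1
      refine ⟨Walk.cons false true (step_iff.mpr (Or.inl ⟨rfl, rfl, hE⟩))
        (Walk.cons false g2 gst gq), ?_, rfl, ?_⟩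
      · intro mk hmk
        simp only [Walk.marksInternal_cons_cons, List.mem_cons] at hmk
        rcases hmk with rfl | hmk
        · exact ⟨fun hc2 => absurd hc2.2 (by simp), fun _ => hc m1 (Relation.TransGen.single hE)⟩
        · exact hact mk hmk
      · exact hl

theorem end_mem_support {G : MixedGraph V} : ∀ {a b : V} (w : G.Walk a b), b ∈ w.support
  | _, _, .nil v => by simp
  | _, _, .cons _ _ _ p => by simp [end_mem_support p]

theorem mem_support_of_mem_marks {G : MixedGraph V} {a b : V} (w : G.Walk a b) :
    ∀ {mk : V × Bool × Bool}, mk ∈ w.marksInternal → mk.1 ∈ w.support := by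
  induction w with
  | nil v => intro mk hm; simp at hm
  | cons hu hv h p ih =>
    intro mk hm
    cases p with
    | nil => simp at hm
    | cons hu2 hv2 h2 q =>
      rw [Walk.marksInternal_cons_cons, List.mem_cons] at hm
      rcases hm with rfl | hm
      · simp
      · have := ih hm
        simp only [Walk.support_cons, List.mem_cons] at this ⊢
        tauto

theorem marks_ne_endpoints {G : MixedGraph V} {a b : V} (w : G.Walk a b) (hp : w.IsPath) :
    ∀ {mk : V × Bool × Bool}, mk ∈ w.marksInternal → mk.1 ≠ a ∧ mk.1 ≠ b := by
  induction w with
  | nil v => intro mk hm; simp at hm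
  | cons hu hv h p ih =>
    intro mk hm
    cases p with
    | nil => simp at hm
    | cons hu2 hv2 h2 q =>
      have hp2 := hp
      unfold Walk.IsPath at hp2
      rw [Walk.support_cons, List.nodup_cons] at hp2
      have hp' : (Walk.cons hu2 hv2 h2 q).IsPath := hp2.2
      have hanot := hp2.1
      rw [Walk.marksInternal_cons_cons, List.mem_cons] at hm
      rcases hm with rfl | hm
      · constructor
        · intro hsa
          exact hanot (by rw [← hsa]; simp)
        · intro hsb
          have hp'2 := hp'
          unfold Walk.IsPath at hp'2
          rw [Walk.support_cons, List.nodup_cons] at hp'2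
          exact hp'2.1 (hsb ▸ end_mem_support q)
      · obtain ⟨h1, h2'⟩ := ih hp' hm
        refine ⟨fun hma => ?_, h2'⟩
        exact hanot (hma ▸ mem_support_of_mem_marks (Walk.cons hu2 hv2 h2 q) hm)

theorem kcov_dconn {k : ℕ} {u v : V} (hcov : KCovered E k u v) (c : Finset V)
    (hc : c.card ≤ k) : (ofDAG E).DConn ↑c u v := not_not.mp (hcov c hc)

open Classical in
noncomputable def badset (E : V → V → Prop) (c : Finset V) (u v : V) : Finset V :=
  c.filter (fun w => Relation.TransGen E v w ∨
    (¬ Relation.ReflTransGen E u v ∧ Relation.TransGen E u w))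

open Classical in
theorem mem_badset {c : Finset V} {u v w : V} : w ∈ badset E c u v ↔
    w ∈ c ∧ (Relation.TransGen E v w ∨
      (¬ Relation.ReflTransGen E u v ∧ Relation.TransGen E u w)) := by
  simp [badset]

open Classical in
theorem exists_maximal (hAc : Acyclic E) : ∀ (n : ℕ) (S : Finset V), S.card ≤ n →
    S.Nonempty → ∃ d ∈ S, ∀ s ∈ S, ¬ Relation.TransGen E d s := by
  intro n
  induction n with
  | zero =>
    intro S h hne
    have := Finset.card_pos.mpr hne
    omega
  | succ n ih =>
    intro S hcard hne
    obtain ⟨d₀, hd₀⟩ := hne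
    by_cases hmax : ∀ s ∈ S, ¬ Relation.TransGen E d₀ s
    · exact ⟨d₀, hd₀, hmax⟩
    · push_neg at hmax
      obtain ⟨s₀, hs₀, htr⟩ := hmax
      set T := S.filter (fun s => Relation.TransGen E d₀ s) with hT
      have hTsub : T ⊆ S := Finset.filter_subset _ _
      have hd₀T : d₀ ∉ T := fun hh => hAc d₀ ((Finset.mem_filter.mp hh).2)
      have hss : T ⊂ S := (Finset.ssubset_iff_of_subset hTsub).mpr ⟨d₀, hd₀, hd₀T⟩
      have hTcard : T.card < S.card := Finset.card_lt_card hss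
      have hs₀T : s₀ ∈ T := Finset.mem_filter.mpr ⟨hs₀, htr⟩
      obtain ⟨d, hdT, hdmax⟩ := ih T (by omega) ⟨s₀, hs₀T⟩
      refine ⟨d, hTsub hdT, fun s hs htr2 => ?_⟩
      have hd₀d : Relation.TransGen E d₀ d := (Finset.mem_filter.mp hdT).2
      exact hdmax s (Finset.mem_filter.mpr ⟨hs, hd₀d.trans htr2⟩) htr2

theorem keyGenBase (hAc : Acyclic E) {k : ℕ} {u v : V}
    (hcov : ∀ c' : Finset V, c'.card ≤ k → (ofDAG E).DConn ↑c' u v)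
    (H4 : ¬ Relation.ReflTransGen E v u) (c : Finset V) (hc : c.card ≤ k)
    (hbad : badset E c u v = ∅) :
    ∃ W : (ofDAG E).Walk u v, W.Active ↑c ∧ W.lastHead = some true ∧
      (u ∈ c → ¬ Relation.ReflTransGen E u v → W.firstHead = some true) := by
  classical
  have hne : u ≠ v := fun h => H4 (h ▸ Relation.ReflTransGen.refl)
  set c' : Finset V := (c.erase u).erase v with hc'
  have hsubc : c' ⊆ c := by
    rw [hc']
    intro x hx
    exact Finset.erase_subset _ _ (Finset.erase_subset _ _ hx)
  have hc'k : c'.card ≤ k := le_trans (Finset.card_le_card hsubc) hc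
  obtain ⟨q, hqpath, hqdc⟩ := hcov c' hc'k
  have hbadmem : ∀ w ∈ c, ¬ (Relation.TransGen E v w ∨
      (¬ Relation.ReflTransGen E u v ∧ Relation.TransGen E u w)) := by
    intro w hw hcontra
    have : w ∈ badset E c u v := mem_badset.mpr ⟨hw, hcontra⟩
    simp [hbad] at this
  have hqdc_c : q.DConnecting ↑c := by
    intro mk hmk
    obtain ⟨hcol, hnc⟩ := hqdc mk hmk
    refine ⟨fun h2 => ?_, fun h2 => ?_⟩
    · obtain ⟨x, hx, hanc⟩ := hcol h2
      exact ⟨x, Finset.mem_coe.mpr (hsubc (Finset.mem_coe.mp hx)), hanc⟩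
    · intro hmem
      obtain ⟨h1, h2'⟩ := marks_ne_endpoints q hqpath hmk
      refine (hnc h2) (Finset.mem_coe.mpr ?_)
      rw [hc']
      exact Finset.mem_erase.mpr ⟨h2', Finset.mem_erase.mpr ⟨h1, Finset.mem_coe.mp hmem⟩⟩
  cases q with
  | nil => exact absurd rfl hne
  | cons g1 g2 gst gq =>
  obtain ⟨α, hα⟩ := Walk.lastHead_cons_isSome g1 g2 gst gq
  have hαtrue : α = true := by
    by_contra hαf
    have hαf : α = false := by cases α; rfl; exact absurd rfl hαf
    have hrevdc : (Walk.cons g1 g2 gst gq).reverse.DConnecting ↑c' := hqdc.reverse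
    have hfh : (Walk.cons g1 g2 gst gq).reverse.firstHead = some false := by
      rw [Walk.firstHead_reverse, hα, hαf]
    rcases trace _ hrevdc hfh with htr | ⟨w, hw, htr⟩
    · exact H4 htr.to_reflTransGen
    · exact hbadmem w (hsubc (Finset.mem_coe.mp hw)) (Or.inl htr)
  obtain ⟨W', hact, hfh', hlh'⟩ := activate (Walk.cons g1 g2 gst gq) hqdc_c
  refine ⟨W', hact, ?_, ?_⟩
  · rw [hlh', hα, hαtrue]
  · intro huc hur
    have hg1t : g1 = true := by
      by_contra hg1
      have hg1 : g1 = false := by cases g1; rfl; exact absurd rfl hg1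
      rcases trace (Walk.cons g1 g2 gst gq) hqdc (by simp [hg1]) with htr | ⟨w, hw, htr⟩
      · exact hur htr.to_reflTransGen
      · exact hbadmem w (hsubc (Finset.mem_coe.mp hw)) (Or.inr ⟨hur, htr⟩)
    rw [hfh']
    simp [hg1t]

theorem keyGenAux (hAc : Acyclic E) {k : ℕ} {u v : V}
    (hcov : ∀ c' : Finset V, c'.card ≤ k → (ofDAG E).DConn ↑c' u v)
    (H4 : ¬ Relation.ReflTransGen E v u) : ∀ (n : ℕ) (c : Finset V), c.card ≤ k →
    (badset E c u v).card ≤ n →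
    ∃ W : (ofDAG E).Walk u v, W.Active ↑c ∧ W.lastHead = some true ∧
      (u ∈ c → ¬ Relation.ReflTransGen E u v → W.firstHead = some true) := by
  classical
  intro n
  induction n with
  | zero =>
    intro c hck hbn
    exact keyGenBase hAc hcov H4 c hck
      (Finset.card_eq_zero.mp (le_antisymm hbn (Nat.zero_le _)))
  | succ n ih =>
    intro c hck hbn
    by_cases hbe : badset E c u v = ∅
    · exact keyGenBase hAc hcov H4 c hck hbe
    obtain ⟨d, hdS, hdmax⟩ := exists_maximal hAc (badset E c u v).card _ le_rfl
      (Finset.nonempty_iff_ne_empty.mpr hbe)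
    have hdc : d ∈ c := (mem_badset.mp hdS).1
    have hdbad := (mem_badset.mp hdS).2
    have hdnu : d ≠ u := by
      rintro rfl
      rcases hdbad with htr | ⟨hnr, htr⟩
      · exact H4 htr.to_reflTransGen
      · exact hAc d htr
    have hdnv : d ≠ v := by
      rintro rfl
      rcases hdbad with htr | ⟨hnr, htr⟩
      · exact hAc d htr
      · exact hnr htr.to_reflTransGen
    have hc₂k : (c.erase d).card ≤ k :=
      le_trans (Finset.card_le_card (Finset.erase_subset _ _)) hck
    have hbsub : badset E (c.erase d) u v = (badset E c u v).erase d := by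
      ext w
      simp only [mem_badset, Finset.mem_erase]
      tauto
    have hbn₂ : (badset E (c.erase d) u v).card ≤ n := by
      rw [hbsub]
      have := Finset.card_erase_of_mem hdS
      omega
    obtain ⟨W, hact, hlast, hstart⟩ := ih (c.erase d) hc₂k hbn₂
    have notbad : ∀ w ∈ c.erase d, ¬ Relation.TransGen E d w := by
      intro w hw htr
      refine hdmax w (mem_badset.mpr ⟨Finset.erase_subset _ _ hw, ?_⟩) htr
      rcases hdbad with hb | ⟨hnr, hb⟩
      · exact Or.inl (hb.trans htr)
      · exact Or.inr ⟨hnr, hb.trans htr⟩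
    refine ⟨W, ?_, hlast, fun huc hur =>
      hstart (Finset.mem_erase.mpr ⟨fun h => hdnu h.symm, huc⟩) hur⟩
    intro mk hmk
    obtain ⟨hcol, hnc⟩ := hact mk hmk
    refine ⟨fun h2 => Finset.mem_coe.mpr
      (Finset.erase_subset _ _ (Finset.mem_coe.mp (hcol h2))), fun h2 hmemc => ?_⟩
    have hmk1d : mk.1 = d := by
      by_contra hne2
      exact (hnc h2) (Finset.mem_coe.mpr
        (Finset.mem_erase.mpr ⟨hne2, Finset.mem_coe.mp hmemc⟩))
    obtain ⟨m1, i, o⟩ := mk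
    simp only at hmk1d
    subst hmk1d
    by_cases ho : o = true
    · -- i must be false; trace backwards along the reversed walk
      have hi : i = false := by
        cases i
        · rfl
        · exact absurd ⟨rfl, ho⟩ h2
      subst hi; subst ho
      have hrev : ((m1, true, false) : V × Bool × Bool) ∈ W.reverse.marksInternal := by
        rw [Walk.marksInternal_reverse]
        simp only [List.mem_reverse, List.mem_map]
        exact ⟨(m1, false, true), hmk, rfl⟩
      obtain ⟨W2, hW2f, hW2sub⟩ := Walk.splitMark W.reverse hrev
      have hW2dc : W2.DConnecting ↑(c.erase m1) :=
        (Walk.Active.of_sub hW2sub hact.reverse).dconnecting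
      rcases trace W2 hW2dc (by rw [hW2f]) with htr | ⟨w, hw, htr⟩
      · rcases hdbad with hb | ⟨hnr, hb⟩
        · exact H4 (hb.trans htr).to_reflTransGen
        · exact hAc m1 (htr.trans hb)
      · exact notbad w (Finset.mem_coe.mp hw) htr
    · have ho : o = false := by
        cases o
        · rfl
        · exact absurd rfl ho
      subst ho
      obtain ⟨W2, hW2f, hW2sub⟩ := Walk.splitMark W hmk
      have hW2dc : W2.DConnecting ↑(c.erase m1) :=
        (Walk.Active.of_sub hW2sub hact).dconnecting
      rcases trace W2 hW2dc (by rw [hW2f]) with htr | ⟨w, hw, htr⟩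
      · rcases hdbad with hb | ⟨hnr, hb⟩
        · exact hAc v (hb.trans htr)
        · exact hnr (hb.trans htr).to_reflTransGen
      · exact notbad w (Finset.mem_coe.mp hw) htr

theorem keyGen (hAc : Acyclic E) {k : ℕ} {u v : V}
    (hcov : ∀ c' : Finset V, c'.card ≤ k → (ofDAG E).DConn ↑c' u v)
    (H4 : ¬ Relation.ReflTransGen E v u) (c : Finset V) (hc : c.card ≤ k) :
    ∃ W : (ofDAG E).Walk u v, W.Active ↑c ∧ W.lastHead = some true ∧
      (u ∈ c → ¬ Relation.ReflTransGen E u v → W.firstHead = some true) :=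
  keyGenAux hAc hcov H4 (badset E c u v).card c hc le_rfl

theorem kstep_ne (hAc : Acyclic E) {k : ℕ} {u v : V} {hu hv : Bool}
    (hst : (kClosure E k).step u v hu hv) : u ≠ v := by
  rintro rfl
  rcases hst with ⟨_, _, _, htr⟩ | ⟨_, _, _, htr⟩ | ⟨_, _, hbi⟩
  · exact hAc u htr
  · exact hAc u htr
  · rcases hbi with ⟨_, _, hr, _⟩ | ⟨_, _, hr, _⟩ <;>
      exact hr Relation.ReflTransGen.refl

/-- per-edge walks for a directed `k`-closure edge `u → v`. -/
theorem perEdgeDir (hAc : Acyclic E) {k : ℕ} {u v : V} (hcov : KCovered E k u v)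
    (htr : Relation.TransGen E u v) (c : Finset V) (hc : c.card ≤ k) :
    ∃ W : (ofDAG E).Walk u v, W.Active ↑c ∧
      (v ∈ c → W.lastHead = some true) ∧
      (u ∉ c → (∀ w ∈ c, ¬ Relation.ReflTransGen E u w) → W.firstHead = some false) := by
  have hcov' : ∀ c' : Finset V, c'.card ≤ k → (ofDAG E).DConn ↑c' u v :=
    fun c' h => kcov_dconn hcov c' h
  have H4 : ¬ Relation.ReflTransGen E v u :=
    fun hr => hAc u (Relation.TransGen.trans_left htr hr)
  by_cases hvc : v ∈ c
  · obtain ⟨W, hact, hlast, _⟩ := keyGen hAc hcov' H4 c hc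
    exact ⟨W, hact, fun _ => hlast,
      fun _ hall => absurd htr.to_reflTransGen (hall v hvc)⟩
  · by_cases hucase : u ∉ c ∧ (∀ w ∈ c, ¬ Relation.ReflTransGen E u w)
    · obtain ⟨W, hact, hf, _⟩ := directedWalk htr
        (fun s hs hsc => (hucase.2 s hsc) hs.to_reflTransGen)
      exact ⟨W, hact, fun hvc2 => absurd hvc2 hvc, fun _ _ => hf⟩
    · obtain ⟨q, _, hqdc⟩ := hcov' c hc
      obtain ⟨W, hact, _, _⟩ := activate q hqdc
      refine ⟨W, hact, fun hvc2 => absurd hvc2 hvc, fun hunc hall => ?_⟩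
      exact absurd ⟨hunc, hall⟩ hucase

/-- per-edge walks for a bidirected `k`-closure edge. -/
theorem perEdgeBi (hAc : Acyclic E) {k : ℕ} {u v : V} (hcov1 : KCovered E k u v)
    (hcov2 : KCovered E k v u) (hr1 : ¬ Relation.ReflTransGen E u v)
    (hr2 : ¬ Relation.ReflTransGen E v u) (c : Finset V) (hc : c.card ≤ k) :
    ∃ W : (ofDAG E).Walk u v, W.Active ↑c ∧
      (u ∈ c → W.firstHead = some true) ∧
      (v ∈ c → W.lastHead = some true) := by
  have hcov1' : ∀ c' : Finset V, c'.card ≤ k → (ofDAG E).DConn ↑c' u v :=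
    fun c' h => kcov_dconn hcov1 c' h
  have hcov2' : ∀ c' : Finset V, c'.card ≤ k → (ofDAG E).DConn ↑c' v u :=
    fun c' h => kcov_dconn hcov2 c' h
  by_cases hvc : v ∈ c
  · obtain ⟨W, hact, hlast, hstart⟩ := keyGen hAc hcov1' hr2 c hc
    exact ⟨W, hact, fun huc => hstart huc hr1, fun _ => hlast⟩
  · by_cases huc : u ∈ c
    · obtain ⟨W', hact, hlast, _⟩ := keyGen hAc hcov2' hr1 c hc
      refine ⟨W'.reverse, hact.reverse, fun _ => ?_, fun hvc2 => absurd hvc2 hvc⟩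
      rw [Walk.firstHead_reverse, hlast]
    · obtain ⟨q, _, hqdc⟩ := hcov1' c hc
      obtain ⟨W, hact, _, _⟩ := activate q hqdc
      exact ⟨W, hact, fun huc2 => absurd huc2 huc, fun hvc2 => absurd hvc2 hvc⟩

/-- the full per-edge lemma. -/
theorem perEdge (hAc : Acyclic E) {k : ℕ} {u v : V} {hu hv : Bool}
    (hst : (kClosure E k).step u v hu hv) (c : Finset V) (hc : c.card ≤ k) :
    ∃ W : (ofDAG E).Walk u v, W.Active ↑c ∧
      (u ∈ c → hu = true → W.firstHead = some true) ∧
      (u ∉ c → (∀ w ∈ c, ¬ Relation.ReflTransGen E u w) → hu = false →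
        W.firstHead = some false) ∧
      (v ∈ c → hv = true → W.lastHead = some true) ∧
      (v ∉ c → (∀ w ∈ c, ¬ Relation.ReflTransGen E v w) → hv = false →
        W.lastHead = some false) := by
  rcases hst with ⟨hhu, hhv, hcov, htr⟩ | ⟨hhu, hhv, hcov, htr⟩ | ⟨hhu, hhv, hbi⟩
  · subst hhu; subst hhv
    obtain ⟨W, hact, h1, h2⟩ := perEdgeDir hAc hcov htr c hc
    exact ⟨W, hact, fun _ h => absurd h (by simp), fun hun hall _ => h2 hun hall,
      fun hvc _ => h1 hvc, fun _ _ h => absurd h (by simp)⟩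
  · subst hhu; subst hhv
    obtain ⟨W', hact, h1, h2⟩ := perEdgeDir hAc hcov htr c hc
    refine ⟨W'.reverse, hact.reverse, fun huc _ => ?_, fun _ _ h => absurd h (by simp),
      fun _ h => absurd h (by simp), fun hvn hall _ => ?_⟩
    · rw [Walk.firstHead_reverse]; exact h1 huc
    · rw [Walk.lastHead_reverse]; exact h2 hvn hall
  · subst hhu; subst hhv
    have hbi' : KCovered E k u v ∧ KCovered E k v u ∧
        ¬ Relation.ReflTransGen E u v ∧ ¬ Relation.ReflTransGen E v u := by
      rcases hbi with ⟨a1, a2, a3, a4⟩ | ⟨a1, a2, a3, a4⟩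
      · exact ⟨a1, a2, a3, a4⟩
      · exact ⟨a2, a1, a4, a3⟩
    obtain ⟨hcov1, hcov2, hr1, hr2⟩ := hbi'
    obtain ⟨W, hact, h1, h2⟩ := perEdgeBi hAc hcov1 hcov2 hr1 hr2 c hc
    exact ⟨W, hact, fun huc _ => h1 huc, fun _ _ h => absurd h (by simp),
      fun hvc _ => h2 hvc, fun _ _ h => absurd h (by simp)⟩

theorem joinAt {c : Set V} {x m b : V} (W1 : (ofDAG E).Walk x m) (W2 : (ofDAG E).Walk m b)
    (hact1 : W1.Active c) (hact2 : W2.Active c) (hne : W1.firstHead ≠ none)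
    (hjun : ∀ α β, W1.lastHead = some α → W2.firstHead = some β →
      ((α = true ∧ β = true ∧ m ∈ c) ∨ (¬ (α = true ∧ β = true) ∧ m ∉ c) ∨
       (m ∉ c ∧ ∃ w ∈ c, Relation.ReflTransGen E m w))) :
    ∃ W : (ofDAG E).Walk x b, W.Active c ∧ W.firstHead = W1.firstHead := by
  cases W2 with
  | nil => exact ⟨W1, hact1, rfl⟩
  | cons b1 b2 bst bq =>
  cases W1 with
  | nil => exact absurd rfl hne
  | cons a1 a2 ast aq =>
  obtain ⟨α, hα⟩ := Walk.lastHead_cons_isSome a1 a2 ast aq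
  have happ : ∀ (hj : ∀ mk', mk' = (m, α, b1) →
      ((mk'.2.1 = true ∧ mk'.2.2 = true) → mk'.1 ∈ c) ∧
      (¬ (mk'.2.1 = true ∧ mk'.2.2 = true) → mk'.1 ∉ c)),
      ∃ W : (ofDAG E).Walk x b, W.Active c ∧
        W.firstHead = (Walk.cons a1 a2 ast aq).firstHead := by
    intro hj
    refine ⟨(Walk.cons a1 a2 ast aq).append (Walk.cons b1 b2 bst bq), ?_, by
      rw [Walk.firstHead_append]; simp⟩
    intro mk hmk
    rw [Walk.marksInternal_append, hα] at hmk
    simp only [Walk.firstHead_cons, List.append_assoc, List.mem_append,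
      List.mem_singleton, List.mem_cons, List.not_mem_nil, or_false,
      List.nil_append] at hmk
    rcases hmk with hmk | hmk | hmk
    · exact hact1 mk hmk
    · exact hj mk hmk
    · exact hact2 mk hmk
  rcases hjun α b1 hα rfl with ⟨hα1, hβ1, hmc⟩ | ⟨hnb, hmc⟩ | ⟨hmc, hAn⟩
  · refine happ ?_
    rintro mk' rfl
    subst hα1; subst hβ1
    exact ⟨fun _ => hmc, fun hn => absurd ⟨rfl, rfl⟩ hn⟩
  · refine happ ?_
    rintro mk' rfl
    exact ⟨fun hcl => absurd hcl hnb, fun _ => hmc⟩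
  · by_cases hab : α = true ∧ b1 = true
    · obtain ⟨w, hw, hrt⟩ := hAn
      obtain ⟨d, hdact, hdf, hdl⟩ := detour hw hrt hmc
      cases d with
      | nil => simp at hdf
      | cons d1 d2 dst dq =>
        have hd1 : d1 = false := by simpa using hdf
        subst hd1
        refine ⟨(Walk.cons a1 a2 ast aq).append ((Walk.cons false d2 dst dq).append
          (Walk.cons b1 b2 bst bq)), ?_, by rw [Walk.firstHead_append]; simp⟩
        intro mk hmk
        rw [Walk.marksInternal_append, hα] at hmk
        rw [Walk.firstHead_append] at hmk
        simp only [Walk.firstHead_cons] at hmk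
        rw [Walk.marksInternal_append, hdl] at hmk
        simp only [Walk.firstHead_cons, List.append_assoc, List.mem_append,
          List.mem_singleton, List.mem_cons, List.not_mem_nil, or_false,
          List.nil_append] at hmk
        rcases hmk with hmk | hmk | hmk | hmk | hmk
        · exact hact1 mk hmk
        · subst hmk
          exact ⟨fun hcl => absurd hcl.2 (by simp), fun _ => hmc⟩
        · exact hdact mk hmk
        · subst hmk
          exact ⟨fun hcl => absurd hcl.1 (by simp), fun _ => hmc⟩
        · exact hact2 mk hmk
    · refine happ ?_
      rintro mk' rfl
      exact ⟨fun hcl => absurd hcl hab, fun _ => hmc⟩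

theorem anc_kClosure {k : ℕ} {a b : V} (h : (kClosure E k).Anc a b) :
    Relation.ReflTransGen E a b := by
  induction h with
  | refl => exact Relation.ReflTransGen.refl
  | tail hab hstep ih => exact ih.trans hstep.2.to_reflTransGen

/-- main construction: from a d-connecting walk in the k-closure, build an active
walk in the DAG. -/
theorem build (hAc : Acyclic E) {k : ℕ} (c : Finset V) (hc : c.card ≤ k) {b : V} :
    ∀ {m : V} (p' : (kClosure E k).Walk m b) {x : V} {hu h1 : Bool}
      (st : (kClosure E k).step x m hu h1),
      (Walk.cons hu h1 st p').DConnecting ↑c →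
      ∃ W : (ofDAG E).Walk x b, W.Active ↑c ∧
        (x ∈ c → hu = true → W.firstHead = some true) ∧
        (x ∉ c → (∀ w ∈ c, ¬ Relation.ReflTransGen E x w) → hu = false →
          W.firstHead = some false)
  | _, .nil _, x, hu, h1, st, hdc => by
    obtain ⟨W, hact, c1, c2, _, _⟩ := perEdge hAc st c hc
    exact ⟨W, hact, c1, c2⟩
  | _, .cons (u := m) h2 h2' st2 p'', x, hu, h1, st, hdc => by
    have hmark : ((m, h1, h2) : V × Bool × Bool) ∈
        (Walk.cons hu h1 st
          (Walk.cons h2 h2' st2 p'')).marksInternal := by simp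
    obtain ⟨hcolj, hncj⟩ := hdc _ hmark
    have hsub : ∀ mk ∈ (Walk.cons h2 h2' st2 p'').marksInternal,
        mk ∈ (Walk.cons hu h1 st
          (Walk.cons h2 h2' st2 p'')).marksInternal := by
      intro mk hmk; simp [hmk]
    obtain ⟨W2, hact2, d1, d2⟩ := build hAc c hc p'' st2 (Walk.DConnecting.of_sub hsub hdc)
    obtain ⟨W1, hact1, c1, c2, c3, c4⟩ := perEdge hAc st c hc
    have hxm : x ≠ m := kstep_ne hAc st
    have hW1ne : W1.firstHead ≠ none := by
      cases W1 with
      | nil => exact absurd rfl hxm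
      | cons _ _ _ _ => simp
    have hjun : ∀ α β, W1.lastHead = some α → W2.firstHead = some β →
        ((α = true ∧ β = true ∧ m ∈ (↑c : Set V)) ∨
         (¬ (α = true ∧ β = true) ∧ m ∉ (↑c : Set V)) ∨
         (m ∉ (↑c : Set V) ∧ ∃ w ∈ (↑c : Set V), Relation.ReflTransGen E m w)) := by
      intro α β hα hβ
      by_cases hmc : m ∈ c
      · have hcol : h1 = true ∧ h2 = true := by
          by_contra hh
          exact (hncj hh) (Finset.mem_coe.mpr hmc)
        have hαt := c3 hmc hcol.1
        have hβt := d1 hmc hcol.2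
        rw [hα] at hαt; rw [hβ] at hβt
        exact Or.inl ⟨by simpa using hαt.symm, by simpa using hβt.symm,
          Finset.mem_coe.mpr hmc⟩
      · by_cases hmAn : ∃ w ∈ c, Relation.ReflTransGen E m w
        · obtain ⟨w, hw, hrt⟩ := hmAn
          exact Or.inr (Or.inr ⟨fun hh => hmc (Finset.mem_coe.mp hh),
            ⟨w, Finset.mem_coe.mpr hw, hrt⟩⟩)
        · push_neg at hmAn
          have hnc12 : ¬ (h1 = true ∧ h2 = true) := by
            intro hh
            obtain ⟨w, hw, hanc⟩ := hcolj hh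
            exact hmAn w (Finset.mem_coe.mp hw) (anc_kClosure hanc)
          refine Or.inr (Or.inl ⟨?_, fun hh => hmc (Finset.mem_coe.mp hh)⟩)
          rcases Bool.eq_false_or_eq_true h1 with h1t | h1f
          · have h2f : h2 = false := by
              rcases Bool.eq_false_or_eq_true h2 with h2t | h2f
              · exact absurd ⟨h1t, h2t⟩ hnc12
              · exact h2f
            have hβf := d2 hmc hmAn h2f
            rw [hβ] at hβf
            intro hh
            rw [hh.2] at hβf
            simp at hβf
          · have hαf := c4 hmc hmAn h1f
            rw [hα] at hαf
            intro hh
            rw [hh.1] at hαf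
            simp at hαf
    obtain ⟨W, hact, hfh⟩ := joinAt W1 W2 hact1 hact2 hW1ne hjun
    exact ⟨W, hact, fun hxc hut => by rw [hfh]; exact c1 hxc hut,
      fun hxc hall huf => by rw [hfh]; exact c2 hxc hall huf⟩

/-- d-separation transfers from the DAG to its k-closure. -/
theorem transfer (hAc : Acyclic E) {k : ℕ} (c : Finset V) (hc : c.card ≤ k) {a b : V}
    (hsep : (ofDAG E).DSep ↑c a b) : (kClosure E k).DSep ↑c a b := by
  rintro ⟨p, hppath, hpdc⟩
  by_cases hab : a = b
  · subst hab
    exact hsep ⟨.nil a, by simp [Walk.IsPath], fun mk hmk => by simp at hmk⟩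
  · cases p with
    | nil => exact hab rfl
    | cons hu h1 st p' =>
      obtain ⟨W, hact, _, _⟩ := build hAc c hc p' st hpdc
      exact hsep (toPath hAc W.length W le_rfl hact.dconnecting)

end OfDag

/-- in a `k`-closure graph, any non-adjacent pair of distinct nodes is
d-separated by some set of size at most `k`. -/
theorem kClosure_nonadj_dsep_small {V : Type} (E : V → V → Prop) (hE : Acyclic E)
    (k : ℕ) (a b : V) (hab : a ≠ b) (h : ¬ (kClosure E k).Adj a b) :
    ∃ S : Finset V, S.card ≤ k ∧ (kClosure E k).DSep (↑S) a b := by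
  by_cases hcov1 : KCovered E k a b
  · by_cases hcov2 : KCovered E k b a
    · exfalso
      apply h
      by_cases htr1 : Relation.TransGen E a b
      · exact Or.inl ⟨hcov1, htr1⟩
      by_cases htr2 : Relation.TransGen E b a
      · exact Or.inr (Or.inl ⟨hcov2, htr2⟩)
      refine Or.inr (Or.inr (Or.inl ⟨hcov1, hcov2, ?_, ?_⟩))
      · intro hr
        rcases hr.cases_head with heq | ⟨c', h1, h2⟩
        · exact hab heq
        · exact htr1 (Relation.TransGen.head' h1 h2)
      · intro hr
        rcases hr.cases_head with heq | ⟨c', h1, h2⟩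
        · exact hab heq.symm
        · exact htr2 (Relation.TransGen.head' h1 h2)
    · rw [KCovered] at hcov2
      push_neg at hcov2
      obtain ⟨S, hcard, hsep'⟩ := hcov2
      exact ⟨S, hcard, MixedGraph.DSep.symm (OfDag.transfer hE S hcard hsep')⟩
  · rw [KCovered] at hcov1
    push_neg at hcov1
    obtain ⟨S, hcard, hsep'⟩ := hcov1
    exact ⟨S, hcard, OfDag.transfer hE S hcard hsep'⟩
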